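/- arXiv:2210.10178 — 8 statements merged into one kernel-verified Lean document; each statement's English description precedes it below -/
import Mathlib

section
/- Let Y be a real normed space whose dual norm is strictly convex. Then every closed subspace X of Y has property U in Y, i.e., every continuous linear functional on X has a unique norm-preserving extension to Y. -/
/-!
Hahn–Banach gives a norm-preserving extension. If `g` and `g'` are two of them, their midpoint
also extends `f`, so `2‖f‖ ≤ ‖g + g'‖ ≤ ‖g‖ + ‖g'‖ = 2‖f‖`; in a strictly convex space, equality
in the triangle inequality between vectors of equal norm forces `g = g'`.
-/

theorem ContinuousLinearMap.norm_le_of_forall_apply_coe_eq {𝕜 E F : Type*}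
    [NontriviallyNormedField 𝕜] [SeminormedAddCommGroup E] [NormedSpace 𝕜 E]
    [SeminormedAddCommGroup F] [NormedSpace 𝕜 F] {p : Submodule 𝕜 E}
    {f : p →L[𝕜] F} {g : E →L[𝕜] F} (hg : ∀ x : p, g x = f x) : ‖f‖ ≤ ‖g‖ := by
  have hf : f = g.comp p.subtypeL := by
    ext x
    exact (hg x).symm
  calc ‖f‖ = ‖g.comp p.subtypeL‖ := by rw [hf]
    _ ≤ ‖g‖ * ‖p.subtypeL‖ := g.opNorm_comp_le _
    _ ≤ ‖g‖ * 1 := by gcongr; exact p.norm_subtypeL_le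
    _ = ‖g‖ := mul_one _

theorem eq_of_extension_of_norm_eq {Y : Type*} [NormedAddCommGroup Y] [NormedSpace ℝ Y]
    [StrictConvexSpace ℝ (StrongDual ℝ Y)] {X : Subspace ℝ Y} {f : StrongDual ℝ X}
    {g g' : StrongDual ℝ Y} (hg : ∀ x : X, g x = f x) (hg' : ∀ x : X, g' x = f x)
    (hgn : ‖g‖ = ‖f‖) (hg'n : ‖g'‖ = ‖f‖) : g = g' := by
  have hmid : ∀ x : X, ((2⁻¹ : ℝ) • (g + g')) x = f x := by
    intro x
    simp only [smul_apply, add_apply, hg, hg', smul_eq_mul]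
    ring
  have hsum_ge : ‖g‖ + ‖g'‖ ≤ ‖g + g'‖ := by
    have : ‖f‖ ≤ 2⁻¹ * ‖g + g'‖ :=
      calc ‖f‖ ≤ ‖(2⁻¹ : ℝ) • (g + g')‖ := ContinuousLinearMap.norm_le_of_forall_apply_coe_eq hmid
        _ ≤ ‖(2⁻¹ : ℝ)‖ * ‖g + g'‖ := (g + g').opNorm_smul_le _
        _ = 2⁻¹ * ‖g + g'‖ := by norm_num
    linarith
  exact eq_of_norm_eq_of_norm_add_eq (hgn.trans hg'n.symm)
    (le_antisymm (norm_add_le g g') hsum_ge)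

theorem propertyU_of_strictConvex_dual_general (Y : Type*) [NormedAddCommGroup Y] [NormedSpace ℝ Y]
    [StrictConvexSpace ℝ (StrongDual ℝ Y)]
    (X : Subspace ℝ Y) (f : X →L[ℝ] ℝ) :
    ∃! g : Y →L[ℝ] ℝ, (∀ x : X, g x = f x) ∧ ‖g‖ = ‖f‖ := by
  obtain ⟨g, hg, hgn⟩ := exists_extension_norm_eq X f
  exact ⟨g, ⟨hg, hgn⟩, fun g' ⟨hg', hg'n⟩ => eq_of_extension_of_norm_eq hg' hg hg'n hgn⟩

/-- If the dual norm of a real normed space `Y` is strictly convex, then every closed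
subspace `X` of `Y` has property U in `Y`: every continuous linear functional on `X`
has a unique norm-preserving extension to `Y`. -/
theorem propertyU_of_strictConvex_dual (Y : Type*) [NormedAddCommGroup Y] [NormedSpace ℝ Y]
    [StrictConvexSpace ℝ (StrongDual ℝ Y)]
    (X : Subspace ℝ Y) (hX : IsClosed (X : Set Y)) (f : X →L[ℝ] ℝ) :
    ∃! g : Y →L[ℝ] ℝ, (∀ x : X, g x = f x) ∧ ‖g‖ = ‖f‖ :=
  propertyU_of_strictConvex_dual_general Y X f
end

section
/- Let Y be a real Banach space such that every closed subspace of Y has property U in Y. Then the dual norm on Y* is strictly convex. -/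
/-!
If `g₁ ≠ g₂` have norm one and `‖g₁ + g₂‖ = 2`, both restrict to the same functional `f` on the
closed hyperplane `X = ker (g₁ - g₂)`, and `‖f‖ = 1`: on the unit ball
`|(g₁ - g₂) y| ≤ 2 - (g₁ + g₂) y`, so vectors almost norming `g₁ + g₂` are almost in `X`, and
projecting them into `X` along a `z` with `(g₁ - g₂) z = 1` loses little. Thus `g₁` and `g₂` are
two distinct norm-preserving extensions of `f`.
-/

section

variable {E : Type*}

theorem ContinuousLinearMap.exists_norm_lt_one_lt_apply [NormedAddCommGroup E] [NormedSpace ℝ E]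
    (g : E →L[ℝ] ℝ) {r : ℝ} (hr : r < ‖g‖) : ∃ y, ‖y‖ < 1 ∧ r < g y := by
  obtain ⟨x, hx, hrx⟩ := g.exists_lt_apply_of_lt_opNorm hr
  rcases le_total 0 (g x) with hpos | hneg
  · exact ⟨x, hx, by rwa [Real.norm_of_nonneg hpos] at hrx⟩
  · refine ⟨-x, by rwa [norm_neg], ?_⟩
    rwa [Real.norm_of_nonpos hneg, ← map_neg] at hrx

variable [SeminormedAddCommGroup E] [NormedSpace ℝ E]

theorem ContinuousLinearMap.exists_apply_eq_one {φ : E →L[ℝ] ℝ} (hφ : φ ≠ 0) : ∃ z, φ z = 1 := by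
  obtain ⟨w, hw⟩ : ∃ w, φ w ≠ 0 := by
    by_contra! h
    exact hφ (ext h)
  exact ⟨(φ w)⁻¹ • w, by rw [map_smul, smul_eq_mul, inv_mul_cancel₀ hw]⟩

theorem ContinuousLinearMap.apply_le_norm_comp_ker_mul_add (φ g : E →L[ℝ] ℝ) {z : E}
    (hz : φ z = 1) (y : E) :
    g y ≤ ‖g.comp (LinearMap.ker (φ : E →ₗ[ℝ] ℝ)).subtypeL‖ * ‖y - φ y • z‖ + φ y * g z := by
  have hker : y - φ y • z ∈ LinearMap.ker (φ : E →ₗ[ℝ] ℝ) := by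
    simp [hz]
  have hsplit : g y = g (y - φ y • z) + φ y * g z := by
    simp
  have hbound := (g.comp (LinearMap.ker (φ : E →ₗ[ℝ] ℝ)).subtypeL).le_opNorm ⟨_, hker⟩
  rw [hsplit]
  gcongr
  exact (le_abs_self _).trans hbound

theorem ContinuousLinearMap.norm_comp_subtypeL_le (g : E →L[ℝ] ℝ) (X : Submodule ℝ E) :
    ‖g.comp X.subtypeL‖ ≤ ‖g‖ :=
  (g.opNorm_comp_le _).trans <|
    mul_le_of_le_one_right (norm_nonneg g) (Submodule.norm_subtypeL_le X)

theorem one_le_norm_comp_ker_sub_add {g₁ g₂ : E →L[ℝ] ℝ} (h₁ : ‖g₁‖ ≤ 1) (h₂ : ‖g₂‖ ≤ 1)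
    {z : E} (hz : (g₁ - g₂) z = 1) {y : E} (hy : ‖y‖ ≤ 1) :
    1 ≤ ‖g₁.comp (LinearMap.ker ((g₁ - g₂ : E →L[ℝ] ℝ) : E →ₗ[ℝ] ℝ)).subtypeL‖
      + (2 - (g₁ + g₂) y) * (1 + 2 * ‖z‖) := by
  set f := g₁.comp (LinearMap.ker ((g₁ - g₂ : E →L[ℝ] ℝ) : E →ₗ[ℝ] ℝ)).subtypeL
  set δ := 2 - (g₁ + g₂) y
  have hg₁y : g₁ y ≤ 1 := (Real.le_norm_self _).trans ((g₁.unit_le_opNorm y hy).trans h₁)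
  have hg₂y : g₂ y ≤ 1 := (Real.le_norm_self _).trans ((g₂.unit_le_opNorm y hy).trans h₂)
  have hsum : (g₁ + g₂) y = g₁ y + g₂ y := rfl
  have hdiff : (g₁ - g₂) y = g₁ y - g₂ y := rfl
  have hφy : |(g₁ - g₂) y| ≤ δ := abs_le.2 ⟨by linarith, by linarith⟩
  have hg₁z : |g₁ z| ≤ ‖z‖ := by simpa using g₁.le_of_opNorm_le h₁ z
  have hf : ‖f‖ ≤ 1 := (g₁.norm_comp_subtypeL_le _).trans h₁
  have hδ : 0 ≤ δ := by linarith
  have hproj : ‖y - (g₁ - g₂) y • z‖ ≤ 1 + δ * ‖z‖ := calc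
    ‖y - (g₁ - g₂) y • z‖ ≤ ‖y‖ + |(g₁ - g₂) y| * ‖z‖ := by
      simpa [norm_smul] using norm_sub_le y ((g₁ - g₂) y • z)
    _ ≤ 1 + δ * ‖z‖ := by gcongr
  have hshift : (g₁ - g₂) y * g₁ z ≤ δ * ‖z‖ := calc
    (g₁ - g₂) y * g₁ z ≤ |(g₁ - g₂) y| * |g₁ z| := by rw [← abs_mul]; exact le_abs_self _
    _ ≤ δ * ‖z‖ := by gcongr
  have key := (g₁ - g₂).apply_le_norm_comp_ker_mul_add g₁ hz y
  have : ‖f‖ * ‖y - (g₁ - g₂) y • z‖ ≤ ‖f‖ + δ * ‖z‖ := calc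
    ‖f‖ * ‖y - (g₁ - g₂) y • z‖ ≤ ‖f‖ * (1 + δ * ‖z‖) := by gcongr
    _ ≤ ‖f‖ + δ * ‖z‖ := by
      rw [mul_add, mul_one]
      gcongr ‖f‖ + ?_
      exact mul_le_of_le_one_left (mul_nonneg hδ (norm_nonneg z)) hf
  linarith

end

theorem norm_comp_ker_sub_eq_one {E : Type*} [NormedAddCommGroup E] [NormedSpace ℝ E]
    {g₁ g₂ : E →L[ℝ] ℝ} (h₁ : ‖g₁‖ ≤ 1) (h₂ : ‖g₂‖ ≤ 1) (hsum : ‖g₁ + g₂‖ = 2) (hne : g₁ ≠ g₂) :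
    ‖g₁.comp (LinearMap.ker ((g₁ - g₂ : E →L[ℝ] ℝ) : E →ₗ[ℝ] ℝ)).subtypeL‖ = 1 := by
  obtain ⟨z, hz⟩ := (g₁ - g₂).exists_apply_eq_one (sub_ne_zero.2 hne)
  have hC : 0 < 1 + 2 * ‖z‖ := by positivity
  refine le_antisymm ((g₁.norm_comp_subtypeL_le _).trans h₁)
    (le_of_forall_pos_le_add fun ε hε => ?_)
  obtain ⟨y, hy, hδ⟩ := (g₁ + g₂).exists_norm_lt_one_lt_apply
    (r := 2 - ε / (1 + 2 * ‖z‖)) (by rw [hsum]; linarith [div_pos hε hC])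
  have key := one_le_norm_comp_ker_sub_add h₁ h₂ hz hy.le
  have : (2 - (g₁ + g₂) y) * (1 + 2 * ‖z‖) ≤ ε := by
    rw [← le_div_iff₀ hC]
    linarith
  linarith

theorem strictConvex_dual_of_propertyU_general (Y : Type*) [NormedAddCommGroup Y] [NormedSpace ℝ Y]
    (hU : ∀ X : Subspace ℝ Y, IsClosed (X : Set Y) →
      ∀ f : X →L[ℝ] ℝ, ∃! g : Y →L[ℝ] ℝ, (∀ x : X, g x = f x) ∧ ‖g‖ = ‖f‖) :
    ∀ g₁ g₂ : Y →L[ℝ] ℝ, ‖g₁‖ = 1 → ‖g₂‖ = 1 → ‖(1 / 2 : ℝ) • (g₁ + g₂)‖ = 1 → g₁ = g₂ := by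
  intro g₁ g₂ h₁ h₂ hmid
  by_contra hne
  have hsum : ‖g₁ + g₂‖ = 2 := by
    rw [norm_smul] at hmid
    norm_num at hmid
    linarith
  set X := LinearMap.ker ((g₁ - g₂ : Y →L[ℝ] ℝ) : Y →ₗ[ℝ] ℝ)
  have hnorm := norm_comp_ker_sub_eq_one h₁.le h₂.le hsum hne
  have hagree : ∀ x : X, g₂ x = g₁ x := fun x => (sub_eq_zero.1 x.2).symm
  obtain ⟨g, -, huniq⟩ := hU X (g₁ - g₂).isClosed_ker (g₁.comp X.subtypeL)
  have e₁ : g₁ = g := huniq g₁ ⟨fun x => rfl, by rw [h₁, hnorm]⟩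
  have e₂ : g₂ = g := huniq g₂ ⟨hagree, by rw [h₂, hnorm]⟩
  exact hne (e₁.trans e₂.symm)

/-- (Converse Taylor–Foguel) If every closed subspace of a real Banach space `Y` has
property U in `Y`, then the dual norm on `Y*` is strictly convex. -/
theorem strictConvex_dual_of_propertyU (Y : Type*) [NormedAddCommGroup Y] [NormedSpace ℝ Y]
    [CompleteSpace Y]
    (hU : ∀ X : Subspace ℝ Y, IsClosed (X : Set Y) →
      ∀ f : X →L[ℝ] ℝ, ∃! g : Y →L[ℝ] ℝ, (∀ x : X, g x = f x) ∧ ‖g‖ = ‖f‖) :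
    ∀ g₁ g₂ : Y →L[ℝ] ℝ, ‖g₁‖ = 1 → ‖g₂‖ = 1 → ‖(1 / 2 : ℝ) • (g₁ + g₂)‖ = 1 → g₁ = g₂ :=
  strictConvex_dual_of_propertyU_general Y hU
end

section
/- Let Y be a Banach space such that every closed subspace X of Y has property wU in Y (every norm-attaining functional on X has a unique Hahn–Banach extension to Y). Then the norm of Y is Gâteaux differentiable, i.e., for every y ∈ S_Y there is a unique y* ∈ S_{Y*} with y*(y) = 1. -/
/-!
Given `y ∈ S_Y`, restrict a Hahn–Banach norming functional of `y` to the line `X = ℝ ∙ y`.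
The result `f` has norm one and attains it at `y`, and a functional on `Y` is a norm-preserving
extension of `f` exactly when it has norm one and takes the value one at `y`. Property wU for
the closed subspace `X` therefore yields the unique supporting functional at `y`.
-/

open Submodule

section SupportingFunctional

variable {E : Type*} [NormedAddCommGroup E] [NormedSpace ℝ E]

theorem ContinuousLinearMap.eqOn_span_singleton_iff {g g' : E →L[ℝ] ℝ} {y : E} :
    (∀ x : ℝ ∙ y, g x = g' x) ↔ g y = g' y := by
  refine ⟨fun h => h ⟨y, mem_span_singleton_self y⟩, fun h ⟨x, hx⟩ => ?_⟩
  obtain ⟨c, rfl⟩ := mem_span_singleton.mp hx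
  simp only [map_smul, h]

theorem ContinuousLinearMap.norm_comp_subtypeL_span_singleton {g : E →L[ℝ] ℝ} {y : E}
    (hg : ‖g‖ = 1) (hy : ‖y‖ = 1) (hgy : g y = 1) :
    ‖g.comp (ℝ ∙ y).subtypeL‖ = 1 := by
  apply le_antisymm
  · calc ‖g.comp (ℝ ∙ y).subtypeL‖ ≤ ‖g‖ * ‖(ℝ ∙ y).subtypeL‖ := g.opNorm_comp_le _
      _ ≤ 1 * 1 := by rw [hg]; gcongr; exact norm_subtypeL_le _
      _ = 1 := one_mul 1
  · simpa [hy, hgy] using (g.comp (ℝ ∙ y).subtypeL).le_opNorm ⟨y, mem_span_singleton_self y⟩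

theorem ContinuousLinearMap.extends_comp_subtypeL_span_singleton_iff {g₀ g : E →L[ℝ] ℝ} {y : E}
    (hg₀ : ‖g₀‖ = 1) (hy : ‖y‖ = 1) (hg₀y : g₀ y = 1) :
    ((∀ x : ℝ ∙ y, g x = g₀.comp (ℝ ∙ y).subtypeL x) ∧ ‖g‖ = ‖g₀.comp (ℝ ∙ y).subtypeL‖) ↔
      ‖g‖ = 1 ∧ g y = 1 := by
  simp only [ContinuousLinearMap.comp_apply, coe_subtypeL, coe_subtype,
    eqOn_span_singleton_iff, g₀.norm_comp_subtypeL_span_singleton hg₀ hy hg₀y, hg₀y]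
  exact and_comm

end SupportingFunctional

theorem gateaux_smooth_of_propertyWU_general
    (Y : Type*) [NormedAddCommGroup Y] [NormedSpace ℝ Y]
    (hwU : ∀ X : Subspace ℝ Y, IsClosed (X : Set Y) →
      ∀ f : X →L[ℝ] ℝ, (∃ x : X, ‖x‖ = 1 ∧ f x = ‖f‖) →
        ∃! g : Y →L[ℝ] ℝ, (∀ x : X, g x = f x) ∧ ‖g‖ = ‖f‖) :
    ∀ y : Y, ‖y‖ = 1 → ∃! g : Y →L[ℝ] ℝ, ‖g‖ = 1 ∧ g y = 1 := by
  intro y hy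
  obtain ⟨g₀, hg₀, hg₀y⟩ := exists_dual_vector ℝ y (by rw [hy]; exact one_ne_zero)
  rw [hy] at hg₀y
  have hf : ‖g₀.comp (ℝ ∙ y).subtypeL‖ = 1 := g₀.norm_comp_subtypeL_span_singleton hg₀ hy hg₀y
  have hattains : ∃ x : ℝ ∙ y, ‖x‖ = 1 ∧ g₀.comp (ℝ ∙ y).subtypeL x = ‖g₀.comp (ℝ ∙ y).subtypeL‖ :=
    ⟨⟨y, mem_span_singleton_self y⟩, hy, by rw [hf]; exact hg₀y⟩
  exact (existsUnique_congr fun _ => g₀.extends_comp_subtypeL_span_singleton_iff hg₀ hy hg₀y).mp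
    (hwU (ℝ ∙ y) (ℝ ∙ y).closed_of_finiteDimensional _ hattains)

/-- If every closed subspace `X` of a Banach space `Y` has property wU in `Y`
(every norm-attaining functional on `X` has a unique Hahn–Banach extension to `Y`),
then the norm of `Y` is Gâteaux differentiable: for every `y ∈ S_Y` there is a unique
`y* ∈ S_{Y*}` with `y*(y) = 1`. -/
theorem gateaux_smooth_of_propertyWU
    (Y : Type*) [NormedAddCommGroup Y] [NormedSpace ℝ Y] [CompleteSpace Y]
    (hwU : ∀ X : Subspace ℝ Y, IsClosed (X : Set Y) →
      ∀ f : X →L[ℝ] ℝ, (∃ x : X, ‖x‖ = 1 ∧ f x = ‖f‖) →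
        ∃! g : Y →L[ℝ] ℝ, (∀ x : X, g x = f x) ∧ ‖g‖ = ‖f‖) :
    ∀ y : Y, ‖y‖ = 1 → ∃! g : Y →L[ℝ] ℝ, ‖g‖ = 1 ∧ g y = 1 :=
  gateaux_smooth_of_propertyWU_general Y hwU
end

section
/- Let K be a compact Hausdorff space and Z ⊆ K a closed subset. Then the closed ideal I_Z(K) = {f ∈ C(K) : f|_Z = 0} has property U in C(K): every continuous linear functional on I_Z(K) has a unique norm-preserving extension to C(K). -/
/-!
Let `g` be a norm-preserving extension of `φ`. Choose `m ∈ I` in the unit ball with `φ m` close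
to `‖φ‖`, and an Urysohn function `χ` equal to `1` on `Z` and vanishing where `|m|` is not small.
For `‖v‖ ≤ 1` the function `m (1 - χ) + v χ` stays in the unit ball while
`g (m (1 - χ)) = φ (m (1 - χ))` is already close to `‖φ‖`, so `|g (v χ)|` is small. Since
`v - v χ ∈ I`, two such extensions can differ on `v` only through their values at `v χ`,
hence by arbitrarily little.
-/

open Set

section Seminormed

variable {E : Type*} [SeminormedAddCommGroup E] [NormedSpace ℝ E]
  {M : Subspace ℝ E} {φ : StrongDual ℝ M} {g : StrongDual ℝ E}

theorem apply_le_norm_sub_of_extends (hg : ∀ m : M, g m = φ m) (hgn : ‖g‖ ≤ ‖φ‖) (m : M)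
    {y : E} (hy : ‖(m : E) + y‖ ≤ 1) : g y ≤ ‖φ‖ - φ m := by
  have : g (m + y) ≤ ‖φ‖ :=
    calc g (m + y) ≤ ‖g‖ * ‖(m : E) + y‖ := (le_abs_self _).trans (g.le_opNorm _)
      _ ≤ ‖φ‖ * 1 := mul_le_mul hgn hy (norm_nonneg _) φ.opNorm_nonneg
      _ = ‖φ‖ := mul_one _
  rw [map_add, hg] at this
  linarith

theorem abs_apply_le_of_extends (hg : ∀ m : M, g m = φ m) (hgn : ‖g‖ ≤ ‖φ‖) (m : M)
    {P : E →ₗ[ℝ] E} (hPm : P m ∈ M) (hP : ∀ v, ‖v‖ ≤ 1 → ‖(m : E) - P m + P v‖ ≤ 1)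
    {v : E} (hv : ‖v‖ ≤ 1) : |g (P v)| ≤ ‖φ‖ - φ m + ‖φ‖ * ‖P m‖ := by
  have hφPm : φ ⟨P m, hPm⟩ ≤ ‖φ‖ * ‖P m‖ := (le_abs_self _).trans (φ.le_opNorm _)
  have hupper : ∀ w : E, ‖w‖ ≤ 1 → g (P w) ≤ ‖φ‖ - φ m + ‖φ‖ * ‖P m‖ := fun w hw => by
    have := apply_le_norm_sub_of_extends hg hgn (m - ⟨P m, hPm⟩) (hP w hw)
    rw [map_sub] at this
    linarith
  have hlower := hupper (-v) (by rwa [norm_neg])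
  rw [map_neg, map_neg] at hlower
  exact abs_le.2 ⟨by linarith, hupper v hv⟩

end Seminormed

section Normed

variable {E : Type*} [NormedAddCommGroup E] [NormedSpace ℝ E]

theorem ContinuousLinearMap.exists_norm_le_one_lt_apply (φ : StrongDual ℝ E) {r : ℝ}
    (hr : r < ‖φ‖) : ∃ x : E, ‖x‖ ≤ 1 ∧ r < φ x := by
  obtain ⟨x, hx1, hrx⟩ := φ.exists_lt_apply_of_lt_opNorm hr
  rw [Real.norm_eq_abs, lt_abs] at hrx
  rcases hrx with hrx | hrx
  · exact ⟨x, hx1.le, hrx⟩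
  · exact ⟨-x, by rw [norm_neg]; exact hx1.le, by rwa [map_neg]⟩

theorem eq_of_extends_of_cutoff {M : Subspace ℝ E} {φ : StrongDual ℝ M} {g₁ g₂ : StrongDual ℝ E}
    (hg₁ : ∀ m : M, g₁ m = φ m) (hgn₁ : ‖g₁‖ ≤ ‖φ‖)
    (hg₂ : ∀ m : M, g₂ m = φ m) (hgn₂ : ‖g₂‖ ≤ ‖φ‖)
    (hcut : ∀ m : M, ‖m‖ ≤ 1 → ∀ δ > 0, ∃ P : E →ₗ[ℝ] E, (∀ v, v - P v ∈ M) ∧ ‖P m‖ ≤ δ ∧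
      ∀ v, ‖v‖ ≤ 1 → ‖(m : E) - P m + P v‖ ≤ 1) :
    g₁ = g₂ := by
  suffices h : ∀ ε > 0, ‖g₁ - g₂‖ ≤ 4 * ε by
    rw [← sub_eq_zero, ← norm_le_zero_iff]
    exact le_of_forall_pos_le_add fun ε hε => by linarith [h (ε / 4) (by positivity)]
  intro ε hε
  obtain ⟨m, hm, hφm⟩ := φ.exists_norm_le_one_lt_apply (sub_lt_self ‖φ‖ hε)
  obtain ⟨P, hPM, hPm, hP⟩ := hcut m hm (ε / (‖φ‖ + 1)) (by positivity)
  have hφPm : ‖φ‖ * ‖P m‖ ≤ ε :=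
    calc ‖φ‖ * ‖P m‖ ≤ (‖φ‖ + 1) * (ε / (‖φ‖ + 1)) :=
          mul_le_mul (by linarith) hPm (norm_nonneg _) (by positivity)
      _ = ε := by field_simp
  have hPm_mem : P m ∈ M := by simpa using M.sub_mem m.2 (hPM m)
  refine ContinuousLinearMap.opNorm_le_of_unit_norm (by positivity) fun v hv => ?_
  have h₁ := abs_apply_le_of_extends hg₁ hgn₁ m hPm_mem hP hv.le
  have h₂ := abs_apply_le_of_extends hg₂ hgn₂ m hPm_mem hP hv.le
  have hsplit : (g₁ - g₂) v = g₁ (P v) - g₂ (P v) := by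
    have hagree := (hg₁ ⟨_, hPM v⟩).trans (hg₂ ⟨_, hPM v⟩).symm
    simp only [map_sub] at hagree
    rw [sub_apply]
    linarith
  rw [hsplit, Real.norm_eq_abs]
  linarith [abs_sub (g₁ (P v)) (g₂ (P v))]

end Normed

namespace ContinuousMap

variable {K : Type*} [TopologicalSpace K] [CompactSpace K]

theorem norm_sub_mul_add_mul_le_one {f v χ : C(K, ℝ)} (hχ : ∀ x, χ x ∈ Icc (0 : ℝ) 1)
    (hf : ‖f‖ ≤ 1) (hv : ‖v‖ ≤ 1) : ‖f - f * χ + v * χ‖ ≤ 1 := by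
  refine (norm_le _ zero_le_one).2 fun x => ?_
  obtain ⟨hf₁, hf₂⟩ := abs_le.1 ((f.norm_coe_le_norm x).trans hf)
  obtain ⟨hv₁, hv₂⟩ := abs_le.1 ((v.norm_coe_le_norm x).trans hv)
  obtain ⟨hχ₀, hχ₁⟩ := hχ x
  simp only [add_apply, mul_apply, sub_apply, Real.norm_eq_abs]
  exact abs_le.2 ⟨by nlinarith, by nlinarith⟩

theorem exists_eqOn_one_norm_mul_le [T2Space K] {Z : Set K} (hZ : IsClosed Z) {f : C(K, ℝ)}
    (hf : ∀ z ∈ Z, f z = 0) {δ : ℝ} (hδ : 0 < δ) :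
    ∃ χ : C(K, ℝ), EqOn χ 1 Z ∧ (∀ x, χ x ∈ Icc (0 : ℝ) 1) ∧ ‖f * χ‖ ≤ δ := by
  have hlarge : IsClosed {x | δ ≤ |f x|} := isClosed_le continuous_const f.continuous.abs
  have hdisj : Disjoint {x | δ ≤ |f x|} Z := by
    refine Set.disjoint_left.2 fun x hx hxZ => ?_
    rw [mem_ofPred_eq, hf x hxZ, abs_zero] at hx
    linarith
  obtain ⟨χ, hχ₀, hχ₁, hχ⟩ := exists_continuous_zero_one_of_isClosed hlarge hZ hdisj
  refine ⟨χ, hχ₁, hχ, (norm_le _ hδ.le).2 fun x => ?_⟩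
  rw [mul_apply, Real.norm_eq_abs, abs_mul, abs_of_nonneg (hχ x).1]
  rcases lt_or_ge (|f x|) δ with hsmall | hlarge
  · nlinarith [(hχ x).2, abs_nonneg (f x)]
  · simp [hχ₀ (show x ∈ {x | δ ≤ |f x|} from hlarge), hδ.le]

end ContinuousMap

/-- (Phelps) Let `K` be a compact Hausdorff space and `Z ⊆ K` closed. The closed ideal
`I_Z(K) = {f ∈ C(K) : f|_Z = 0}` has property U in `C(K)`: every continuous linear
functional on it has a unique norm-preserving extension to `C(K)`. -/
theorem ideal_propertyU (K : Type*) [TopologicalSpace K] [CompactSpace K] [T2Space K]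
    (Z : Set K) (hZ : IsClosed Z)
    (I : Subspace ℝ C(K, ℝ)) (hI : ∀ f : C(K, ℝ), f ∈ I ↔ ∀ z ∈ Z, f z = 0)
    (φ : I →L[ℝ] ℝ) :
    ∃! g : C(K, ℝ) →L[ℝ] ℝ, (∀ f : I, g f = φ f) ∧ ‖g‖ = @norm _ ContinuousLinearMap.hasOpNorm φ := by
  obtain ⟨g, hg, hgn⟩ := exists_extension_norm_eq I φ
  refine ⟨g, ⟨hg, hgn⟩, fun g' ⟨hg', hgn'⟩ => eq_of_extends_of_cutoff hg' hgn'.le hg hgn.le ?_⟩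
  intro m hm δ hδ
  obtain ⟨χ, hχZ, hχ, hmχ⟩ := ContinuousMap.exists_eqOn_one_norm_mul_le hZ ((hI m).1 m.2) hδ
  refine ⟨LinearMap.mulRight ℝ χ, fun v => (hI _).2 fun z hz => ?_, hmχ,
    fun v hv => ContinuousMap.norm_sub_mul_add_mul_le_one hχ hm hv⟩
  simp [hχZ hz]
end

section
/- Let K be a compact Hausdorff space, X a Banach space, and F : K → (X*, w*) continuous such that T_F is a U-embedding. If t, s ∈ K satisfy F(t) = F(s) and t ≠ s, then ‖F(t)‖ < 1. Similarly, if F(t) = −F(s), then ‖F(t)‖ < 1. -/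
/-!
If `‖F t‖ = 1`, the point evaluation `δ_t` is a norm-preserving extension of `F t` through the
isometry `T_F`, so by uniqueness it is the only functional of norm at most one extending `F t`.
When `F t = F s` with `t ≠ s`, the evaluation `δ_s` is another such extension, and when
`F t = -F s` so is `-δ_s`; neither equals `δ_t`, since continuous functions separate the points
of a compact Hausdorff space and `δ_t 1 = 1 ≠ -1 = -δ_s 1`.
-/

/-- The operator `T_F : X → C(K)` associated to a weak*-continuous `F : K → X*`,
given by `(T_F x)(k) = ⟨x, F(k)⟩`. -/
noncomputable def TF {K X : Type*} [TopologicalSpace K] [CompactSpace K]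
    [NormedAddCommGroup X] [NormedSpace ℝ X] (F : C(K, WeakDual ℝ X)) (x : X) : C(K, ℝ) :=
  ⟨fun k => F k x, (WeakDual.eval_continuous x).comp (map_continuous F)⟩

namespace ContinuousMap

variable {K : Type*} [TopologicalSpace K]

theorem norm_evalCLM_le_one [CompactSpace K] (t : K) :
    ‖(evalCLM ℝ t : C(K, ℝ) →L[ℝ] ℝ)‖ ≤ 1 :=
  ContinuousLinearMap.opNorm_le_bound _ zero_le_one fun f => by
    simpa using f.norm_coe_le_norm t

theorem evalCLM_ne_evalCLM [CompactSpace K] [T2Space K] {t s : K} (hts : t ≠ s) :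
    (evalCLM ℝ t : C(K, ℝ) →L[ℝ] ℝ) ≠ evalCLM ℝ s := by
  obtain ⟨f, hft, hfs, -⟩ := exists_continuous_zero_one_of_isClosed isClosed_singleton
    isClosed_singleton (Set.disjoint_singleton.mpr hts)
  intro h
  simpa [hft rfl, hfs rfl] using congrArg (fun δ : C(K, ℝ) →L[ℝ] ℝ => δ f) h

theorem evalCLM_ne_neg_evalCLM (t s : K) :
    (evalCLM ℝ t : C(K, ℝ) →L[ℝ] ℝ) ≠ -evalCLM ℝ s := by
  intro h
  have h1 := congrArg (fun δ : C(K, ℝ) →L[ℝ] ℝ => δ (const K 1)) h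
  norm_num at h1

end ContinuousMap

open ContinuousMap

section UEmbedding

variable {K X : Type*} [TopologicalSpace K] [CompactSpace K]
  [NormedAddCommGroup X] [NormedSpace ℝ X] {F : C(K, WeakDual ℝ X)}

theorem evalCLM_TF (t : K) (x : X) : evalCLM ℝ t (TF F x) = F t x := rfl

theorem norm_toStrongDual_le_one (hiso : ∀ x : X, ‖TF F x‖ = ‖x‖) (t : K) :
    ‖WeakDual.toStrongDual (F t)‖ ≤ 1 :=
  ContinuousLinearMap.opNorm_le_bound _ zero_le_one fun x => by
    rw [one_mul, ← hiso x]
    exact (TF F x).norm_coe_le_norm t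

theorem norm_le_of_comp_TF_eq (hiso : ∀ x : X, ‖TF F x‖ = ‖x‖) {f : X →L[ℝ] ℝ}
    {g : C(K, ℝ) →L[ℝ] ℝ} (hg : ∀ x : X, g (TF F x) = f x) : ‖f‖ ≤ ‖g‖ :=
  f.opNorm_le_bound (norm_nonneg g) fun x => by
    simpa [hg, hiso] using g.le_opNorm (TF F x)

theorem eq_of_comp_TF_eq_of_norm_le (hiso : ∀ x : X, ‖TF F x‖ = ‖x‖)
    (hU : ∀ f : X →L[ℝ] ℝ, ∃! g : C(K, ℝ) →L[ℝ] ℝ,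
      (∀ x : X, g (TF F x) = f x) ∧ ‖g‖ = ‖f‖)
    {f : X →L[ℝ] ℝ} {g₁ g₂ : C(K, ℝ) →L[ℝ] ℝ}
    (hg₁ : ∀ x : X, g₁ (TF F x) = f x) (hn₁ : ‖g₁‖ ≤ ‖f‖)
    (hg₂ : ∀ x : X, g₂ (TF F x) = f x) (hn₂ : ‖g₂‖ ≤ ‖f‖) : g₁ = g₂ :=
  (hU f).unique ⟨hg₁, hn₁.antisymm (norm_le_of_comp_TF_eq hiso hg₁)⟩
    ⟨hg₂, hn₂.antisymm (norm_le_of_comp_TF_eq hiso hg₂)⟩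

theorem eq_evalCLM_of_norm_toStrongDual_eq_one (hiso : ∀ x : X, ‖TF F x‖ = ‖x‖)
    (hU : ∀ f : X →L[ℝ] ℝ, ∃! g : C(K, ℝ) →L[ℝ] ℝ,
      (∀ x : X, g (TF F x) = f x) ∧ ‖g‖ = ‖f‖)
    {t : K} (ht : ‖WeakDual.toStrongDual (F t)‖ = 1) {g : C(K, ℝ) →L[ℝ] ℝ}
    (hg : ∀ x : X, g (TF F x) = F t x) (hgn : ‖g‖ ≤ 1) : g = evalCLM ℝ t :=
  eq_of_comp_TF_eq_of_norm_le hiso hU (f := WeakDual.toStrongDual (F t)) hg (ht ▸ hgn)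
    (evalCLM_TF t) (ht ▸ norm_evalCLM_le_one t)

end UEmbedding

/-- If `T_F : X → C(K)` is a U-embedding, `t, s ∈ K`, then: if `F(t) = F(s)` with `t ≠ s`
then `‖F(t)‖ < 1`; and if `F(t) = −F(s)` then `‖F(t)‖ < 1`. -/
theorem norm_lt_one_of_repeated_value
    {K X : Type*} [TopologicalSpace K] [CompactSpace K] [T2Space K]
    [NormedAddCommGroup X] [NormedSpace ℝ X]
    (F : C(K, WeakDual ℝ X)) (hiso : ∀ x : X, ‖TF F x‖ = ‖x‖)
    (hU : ∀ f : X →L[ℝ] ℝ, ∃! g : C(K, ℝ) →L[ℝ] ℝ,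
      (∀ x : X, g (TF F x) = f x) ∧ ‖g‖ = ‖f‖)
    (t s : K) :
    (F t = F s → t ≠ s → ‖WeakDual.toStrongDual (F t)‖ < 1) ∧
    (F t = -F s → ‖WeakDual.toStrongDual (F t)‖ < 1) := by
  refine ⟨fun hts hne => ?_, fun hts => ?_⟩ <;>
    refine (norm_toStrongDual_le_one hiso t).lt_of_ne fun h1 => ?_
  · have hs : ∀ x : X, evalCLM ℝ s (TF F x) = F t x := fun x => by rw [hts, evalCLM_TF]
    exact evalCLM_ne_evalCLM hne.symm
      (eq_evalCLM_of_norm_toStrongDual_eq_one hiso hU h1 hs (norm_evalCLM_le_one s))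
  · have hs : ∀ x : X, (-evalCLM ℝ s) (TF F x) = F t x := fun x => by
      rw [hts]; rfl
    exact evalCLM_ne_neg_evalCLM t s
      (eq_evalCLM_of_norm_toStrongDual_eq_one hiso hU h1 hs
        ((norm_neg (E := C(K, ℝ) →L[ℝ] ℝ) _).trans_le (norm_evalCLM_le_one s))).symm
end

section
/- Let X be a Banach space whose weak*-closure of Ext B_{X*} intersected with the unit sphere S_{X*} is connected in the weak* topology. Then X cannot be U-embedded into any C(K) space for a compact Hausdorff K. -/
/-!
Let `T : X → C(K)` be a U-embedding and `E = {δₖ ∘ T | k ∈ K}`, a weak*-compact subset of `X*`.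
By Krein–Milman, applied to the weak*-compact fibres of the restriction map `C(K)* → X*`, every
extreme point of `B_{X*}` is the restriction of an extreme point of `B_{C(K)*}`, and these are
the functionals `±δₖ` (Arens–Kelley). So `closure (Ext B_{X*}) ⊆ E ∪ -E`. A norm-one functional
in `E ∩ -E` would have the two different norm-preserving extensions `δₖ` and `-δₖ'`. The
symmetric set `closure (Ext B_{X*}) ∩ S_{X*}` is therefore split by the closed sets `E` and `-E`.
-/

open Set Metric Pointwise

universe u

lemma neg_extremePoints {𝕜 E : Type*} [Ring 𝕜] [PartialOrder 𝕜] [IsOrderedRing 𝕜]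
    [AddCommGroup E] [Module 𝕜 E] (s : Set E) : -extremePoints 𝕜 s = extremePoints 𝕜 (-s) := by
  simpa using image_extremePoints (LinearEquiv.neg 𝕜 : E ≃ₗ[𝕜] E) s

lemma eq_norm_smul_of_add_eq_mem_extremePoints_closedBall {E : Type*} [NormedAddCommGroup E]
    [NormedSpace ℝ E] {x y z : E} (hx : x ∈ extremePoints ℝ (closedBall (0 : E) 1))
    (hsum : y + z = x) (hnorm : ‖y‖ + ‖z‖ ≤ 1) : y = ‖y‖ • x := by
  rcases eq_or_ne y 0 with rfl | hy
  · simp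
  have : Nontrivial E := nontrivial_of_ne y 0 hy
  have hx1 : ‖x‖ = 1 := by simpa using extremePoints_closedBall_subset_sphere hx
  rcases eq_or_ne z 0 with rfl | hz
  · rw [← hsum, add_zero] at hx1 ⊢
    rw [hx1, one_smul]
  have hy0 : 0 < ‖y‖ := norm_pos_iff.2 hy
  have hz0 : 0 < ‖z‖ := norm_pos_iff.2 hz
  have hyz : ‖y‖ + ‖z‖ = 1 := le_antisymm hnorm (hx1 ▸ hsum ▸ norm_add_le y z)
  have hunit : ∀ w : E, w ≠ 0 → ‖w‖⁻¹ • w ∈ closedBall (0 : E) 1 := fun w hw => by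
    simp [norm_smul, inv_mul_cancel₀ (norm_ne_zero_iff.2 hw)]
  have hseg : x ∈ openSegment ℝ (‖y‖⁻¹ • y) (‖z‖⁻¹ • z) :=
    ⟨‖y‖, ‖z‖, hy0, hz0, hyz, by simp [smul_smul, hy0.ne', hz0.ne', hsum]⟩
  rw [← hx.2 (hunit y hy) (hunit z hz) hseg, smul_smul, mul_inv_cancel₀ hy0.ne', one_smul]

namespace ContinuousLinearMap

section RealDual

variable {E : Type*} [NormedAddCommGroup E] [NormedSpace ℝ E]

lemma exists_norm_le_one_lt_apply_s14 (f : StrongDual ℝ E) {r : ℝ} (hr : r < ‖f‖) :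
    ∃ x : E, ‖x‖ ≤ 1 ∧ r < f x := by
  obtain ⟨x, hx, hrx⟩ := f.exists_lt_apply_of_lt_opNorm hr
  rcases le_or_gt 0 (f x) with h | h
  · exact ⟨x, hx.le, by rwa [Real.norm_of_nonneg h] at hrx⟩
  · exact ⟨-x, by simpa using hx.le, by rwa [Real.norm_of_nonpos h.le, ← map_neg] at hrx⟩

lemma norm_add_norm_le_of_forall_apply_add_le {f g : StrongDual ℝ E} {c : ℝ}
    (h : ∀ x y : E, ‖x‖ ≤ 1 → ‖y‖ ≤ 1 → f x + g y ≤ c) : ‖f‖ + ‖g‖ ≤ c := by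
  refine le_of_forall_pos_lt_add fun ε hε => ?_
  obtain ⟨x, hx, hfx⟩ := f.exists_norm_le_one_lt_apply_s14 (sub_lt_self ‖f‖ (half_pos hε))
  obtain ⟨y, hy, hgy⟩ := g.exists_norm_le_one_lt_apply_s14 (sub_lt_self ‖g‖ (half_pos hε))
  linarith [h x y hx hy]

end RealDual

noncomputable def weakDualMap {𝕜 E F : Type*} [NormedField 𝕜] [NormedAddCommGroup E]
    [NormedSpace 𝕜 E] [NormedAddCommGroup F] [NormedSpace 𝕜 F] (L : E →L[𝕜] F) :
    WeakDual 𝕜 F →L[𝕜] WeakDual 𝕜 E where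
  toFun g := StrongDual.toWeakDual ((WeakDual.toStrongDual g).comp L)
  map_add' _ _ := rfl
  map_smul' _ _ := rfl
  cont := WeakDual.continuous_of_continuous_eval fun x => WeakDual.eval_continuous (L x)

end ContinuousLinearMap

instance WeakDual.instLocallyConvexSpace (E : Type*) [AddCommGroup E] [Module ℝ E]
    [TopologicalSpace E] : LocallyConvexSpace ℝ (WeakDual ℝ E) :=
  WeakBilin.locallyConvexSpace

namespace StrongDual

variable {E : Type*} [NormedAddCommGroup E] [NormedSpace ℝ E]

lemma toWeakDual_image_extremePoints_closedBall (r : ℝ) :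
    toWeakDual '' extremePoints ℝ (closedBall (0 : StrongDual ℝ E) r) =
      extremePoints ℝ (WeakDual.toStrongDual ⁻¹' closedBall 0 r) := by
  rw [image_extremePoints, LinearEquiv.image_eq_preimage_symm, symm_toWeakDual]

lemma neg_toWeakDual_image_extremePoints_closedBall (r : ℝ) :
    -(toWeakDual '' extremePoints ℝ (closedBall (0 : StrongDual ℝ E) r)) =
      toWeakDual '' extremePoints ℝ (closedBall (0 : StrongDual ℝ E) r) := by
  rw [toWeakDual_image_extremePoints_closedBall, neg_extremePoints]
  congr 1
  ext f
  simp

end StrongDual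

namespace LinearIsometry

variable {X Y : Type*} [NormedAddCommGroup X] [NormedSpace ℝ X]
  [NormedAddCommGroup Y] [NormedSpace ℝ Y]

lemma exists_extension_norm_eq (T : X →ₗᵢ[ℝ] Y) (f : StrongDual ℝ X) :
    ∃ g : StrongDual ℝ Y, g.comp T.toContinuousLinearMap = f ∧ ‖g‖ = ‖f‖ := by
  let e := T.equivRange
  obtain ⟨g, hg, hnorm⟩ :=
    _root_.exists_extension_norm_eq T.range (f.comp (e.symm : T.range →L[ℝ] X))
  refine ⟨g, ContinuousLinearMap.ext fun x => ?_, ?_⟩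
  · simpa [e] using hg (e x)
  · rw [hnorm, ContinuousLinearMap.opNorm_comp_linearIsometryEquiv]

lemma weakDualMap_image_preimage_closedBall (T : X →ₗᵢ[ℝ] Y) :
    T.toContinuousLinearMap.weakDualMap '' (WeakDual.toStrongDual ⁻¹' closedBall 0 1) =
      WeakDual.toStrongDual ⁻¹' closedBall 0 1 := by
  ext g
  simp only [mem_image, mem_preimage, mem_closedBall_zero_iff]
  constructor
  · rintro ⟨h, hh, rfl⟩
    calc ‖(WeakDual.toStrongDual h).comp T.toContinuousLinearMap‖
        ≤ ‖WeakDual.toStrongDual h‖ * ‖T.toContinuousLinearMap‖ :=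
          ContinuousLinearMap.opNorm_comp_le _ _
      _ ≤ 1 * 1 := by gcongr; exact T.norm_toContinuousLinearMap_le
      _ = 1 := one_mul 1
  · intro hg
    obtain ⟨h, hcomp, hnorm⟩ := T.exists_extension_norm_eq (WeakDual.toStrongDual g)
    exact ⟨StrongDual.toWeakDual h, by simpa [hnorm] using hg,
      (congrArg StrongDual.toWeakDual hcomp).trans g.toWeakDual_toStrongDual⟩

lemma toWeakDual_image_extremePoints_subset (T : X →ₗᵢ[ℝ] Y) :
    StrongDual.toWeakDual '' extremePoints ℝ (closedBall (0 : StrongDual ℝ X) 1) ⊆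
      T.toContinuousLinearMap.weakDualMap ''
        (StrongDual.toWeakDual '' extremePoints ℝ (closedBall (0 : StrongDual ℝ Y) 1)) := by
  simp only [StrongDual.toWeakDual_image_extremePoints_closedBall]
  rw [← T.weakDualMap_image_preimage_closedBall]
  exact surjOn_extremePoints_image T.toContinuousLinearMap.weakDualMap.toContinuousAffineMap
    (WeakDual.isCompact_closedBall 0 1)

end LinearIsometry

namespace ContinuousMap

variable {K : Type*} [TopologicalSpace K] [CompactSpace K]

lemma norm_mul_add_one_sub_mul_le {φ ψ χ : C(K, ℝ)} (hφ : ∀ k, φ k ∈ Icc (0 : ℝ) 1)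
    (hψ : ‖ψ‖ ≤ 1) (hχ : ‖χ‖ ≤ 1) : ‖φ * ψ + (1 - φ) * χ‖ ≤ 1 := by
  refine (norm_le _ zero_le_one).2 fun k => ?_
  have hψk := abs_le.1 (((ψ.norm_coe_le_norm k).trans hψ).trans_eq' (Real.norm_eq_abs _).symm)
  have hχk := abs_le.1 (((χ.norm_coe_le_norm k).trans hχ).trans_eq' (Real.norm_eq_abs _).symm)
  have hφk := hφ k
  simp only [add_apply, mul_apply, sub_apply, one_apply, Real.norm_eq_abs, abs_le]
  constructor <;> nlinarith [hφk.1, hφk.2]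

lemma norm_evalCLM (k : K) : ‖(evalCLM ℝ k : C(K, ℝ) →L[ℝ] ℝ)‖ = 1 := by
  refine le_antisymm (ContinuousLinearMap.opNorm_le_bound _ zero_le_one
    fun φ => by simpa using φ.norm_coe_le_norm k) ?_
  have : Nonempty K := ⟨k⟩
  simpa using (evalCLM ℝ k : C(K, ℝ) →L[ℝ] ℝ).le_opNorm 1

lemma exists_eq_eval_of_map_mul [T2Space K] (χ : StrongDual ℝ C(K, ℝ)) (hone : χ 1 = 1)
    (hmul : ∀ φ ψ, χ (φ * ψ) = χ φ * χ ψ) : ∃ k : K, ∀ φ, χ φ = φ k := by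
  obtain ⟨k, hk⟩ := (WeakDual.CharacterSpace.continuousMapEval_bijective K ℝ).2
    ⟨StrongDual.toWeakDual χ, fun h => one_ne_zero (hone.symm.trans congr($h 1)), hmul⟩
  exact ⟨k, fun φ => (congrArg (fun ξ : WeakDual.characterSpace ℝ C(K, ℝ) => ξ φ) hk).symm⟩

variable {g : StrongDual ℝ C(K, ℝ)}

lemma comp_mul_eq_norm_smul_of_mem_extremePoints (hg : g ∈ extremePoints ℝ (closedBall 0 1))
    {φ : C(K, ℝ)} (hφ : ∀ k, φ k ∈ Icc (0 : ℝ) 1) :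
    g.comp (ContinuousLinearMap.mul ℝ _ φ) = ‖g.comp (ContinuousLinearMap.mul ℝ _ φ)‖ • g := by
  have hg1 : ‖g‖ ≤ 1 := dist_zero_right g ▸ hg.1
  refine eq_norm_smul_of_add_eq_mem_extremePoints_closedBall hg
    (z := g.comp (ContinuousLinearMap.mul ℝ _ (1 - φ)))
    (ContinuousLinearMap.ext fun ψ => by simp)
    (ContinuousLinearMap.norm_add_norm_le_of_forall_apply_add_le fun ψ χ hψ hχ => ?_)
  calc g (φ * ψ) + g ((1 - φ) * χ) = g (φ * ψ + (1 - φ) * χ) := (map_add g _ _).symm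
    _ ≤ ‖g‖ * ‖φ * ψ + (1 - φ) * χ‖ := (Real.le_norm_self _).trans (g.le_opNorm _)
    _ ≤ 1 * 1 := by gcongr; exact norm_mul_add_one_sub_mul_le hφ hψ hχ
    _ = 1 := one_mul 1

lemma exists_comp_mul_eq_smul_of_mem_extremePoints (hg : g ∈ extremePoints ℝ (closedBall 0 1))
    (φ : C(K, ℝ)) : ∃ c : ℝ, g.comp (ContinuousLinearMap.mul ℝ _ φ) = c • g := by
  set r := ‖φ‖ + 1
  have hr : 0 < r := by positivity
  obtain ⟨φ', hφ', hφ⟩ : ∃ φ' : C(K, ℝ), (∀ k, φ' k ∈ Icc (0 : ℝ) 1) ∧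
      φ = (2 * r) • φ' - r • 1 := by
    refine ⟨(2 * r)⁻¹ • (φ + r • 1), fun k => ?_, ?_⟩
    · have := abs_le.1 (((φ.norm_coe_le_norm k).trans (le_add_of_nonneg_right zero_le_one)
        ).trans_eq' (Real.norm_eq_abs _).symm)
      simp only [smul_apply, add_apply, one_apply, smul_eq_mul, mul_one, mem_Icc]
      constructor
      · exact mul_nonneg (by positivity) (by linarith)
      · rw [inv_mul_le_iff₀ (by positivity)]; linarith
    · rw [smul_smul, mul_inv_cancel₀ (by positivity), one_smul, add_sub_cancel_right]
  set c := ‖g.comp (ContinuousLinearMap.mul ℝ _ φ')‖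
  have hc := comp_mul_eq_norm_smul_of_mem_extremePoints hg hφ'
  refine ⟨2 * r * c - r, ContinuousLinearMap.ext fun ψ => ?_⟩
  have hψ : g (φ' * ψ) = c * g ψ := congr($hc ψ)
  change g (φ * ψ) = (2 * r * c - r) * g ψ
  rw [hφ, sub_mul, smul_mul_assoc, smul_mul_assoc, one_mul, map_sub, map_smul, map_smul, hψ,
    smul_eq_mul, smul_eq_mul]
  ring

lemma exists_apply_eq_mul_eval_of_mem_extremePoints [T2Space K]
    (hg : g ∈ extremePoints ℝ (closedBall 0 1)) (hg0 : g ≠ 0) :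
    ∃ k : K, ∀ φ, g φ = g 1 * φ k := by
  choose c hc using exists_comp_mul_eq_smul_of_mem_extremePoints hg
  have hmul : ∀ φ ψ, g (φ * ψ) = c φ * g ψ := fun φ ψ => congr($(hc φ) ψ)
  obtain ⟨ψ₀, hψ₀⟩ : ∃ ψ₀, g ψ₀ ≠ 0 := by
    by_contra! h
    exact hg0 (ContinuousLinearMap.ext h)
  -- `χ φ = g (φ * ψ₀) / g ψ₀` is the multiplier `c φ`, which makes `χ` a character of `C(K, ℝ)`
  set χ : StrongDual ℝ C(K, ℝ) := (g ψ₀)⁻¹ • g.comp ((ContinuousLinearMap.mul ℝ _).flip ψ₀)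
  have hχ : ∀ φ ψ, g (φ * ψ) = χ φ * g ψ := fun φ ψ => by
    have hχc : χ φ = c φ := by
      change (g ψ₀)⁻¹ * g (φ * ψ₀) = c φ
      rw [hmul, mul_comm (c φ), inv_mul_cancel_left₀ hψ₀]
    rw [hχc, hmul]
  obtain ⟨k, hk⟩ := exists_eq_eval_of_map_mul χ
    (by change (g ψ₀)⁻¹ * g (1 * ψ₀) = 1; rw [one_mul, inv_mul_cancel₀ hψ₀])
    (fun φ ψ => mul_right_cancel₀ hψ₀ <| calc
      χ (φ * ψ) * g ψ₀ = g (φ * (ψ * ψ₀)) := by rw [← hχ, mul_assoc]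
      _ = χ φ * χ ψ * g ψ₀ := by rw [hχ, hχ, mul_assoc])
  exact ⟨k, fun φ => by simpa [hk, mul_comm] using hχ φ 1⟩

lemma exists_eq_evalCLM_or_eq_neg_of_mem_extremePoints [T2Space K] [Nonempty K]
    (hg : g ∈ extremePoints ℝ (closedBall 0 1)) :
    ∃ k : K, g = evalCLM ℝ k ∨ g = -evalCLM ℝ k := by
  have : Nontrivial (StrongDual ℝ C(K, ℝ)) :=
    nontrivial_of_ne (evalCLM ℝ (Classical.arbitrary K)) 0 fun h => by simpa using congr($h 1)
  have hg1 : ‖g‖ = 1 := by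
    simpa using extremePoints_closedBall_subset_sphere (A := StrongDual ℝ C(K, ℝ)) hg
  obtain ⟨k, hk⟩ := exists_apply_eq_mul_eval_of_mem_extremePoints hg
    (by rintro rfl; rw [ContinuousLinearMap.opNorm_zero] at hg1; exact zero_ne_one hg1)
  have habs : |g 1| = 1 := by
    refine le_antisymm (by simpa [hg1] using g.le_opNorm 1) (hg1 ▸ ?_)
    refine g.opNorm_le_bound (abs_nonneg _) fun φ => ?_
    rw [hk, norm_mul, Real.norm_eq_abs]
    exact mul_le_mul_of_nonneg_left (φ.norm_coe_le_norm k) (abs_nonneg _)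
  rcases abs_eq zero_le_one |>.1 habs with h | h
  · exact ⟨k, .inl (ContinuousLinearMap.ext fun φ => by rw [hk, h, one_mul]; rfl)⟩
  · exact ⟨k, .inr (ContinuousLinearMap.ext fun φ => by rw [hk, h, neg_one_mul]; rfl)⟩

end ContinuousMap

lemma IsConnected.inter_inter_neg_nonempty {G : Type*} [TopologicalSpace G] [InvolutiveNeg G]
    [ContinuousNeg G] {s E : Set G} (hs : IsConnected s) (hneg : ∀ x ∈ s, -x ∈ s)
    (hE : IsClosed E) (hcover : s ⊆ E ∪ -E) : (s ∩ (E ∩ -E)).Nonempty := by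
  by_contra h
  obtain ⟨x, hx⟩ := hs.nonempty
  rcases isPreconnected_iff_subset_of_disjoint_closed.1 hs.isPreconnected E (-E) hE hE.neg hcover
    (not_nonempty_iff_eq_empty.1 h) with hsE | hsE
  · exact h ⟨x, hx, hsE hx, mem_neg.2 (hsE (hneg x hx))⟩
  · exact h ⟨x, hx, neg_neg x ▸ hsE (hneg x hx), hsE hx⟩

namespace LinearIsometry

variable {X K : Type*} [NormedAddCommGroup X] [NormedSpace ℝ X] [TopologicalSpace K]
  [CompactSpace K]

noncomputable def evalWeakDual (T : X →ₗᵢ[ℝ] C(K, ℝ)) (k : K) : WeakDual ℝ X :=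
  T.toContinuousLinearMap.weakDualMap (StrongDual.toWeakDual (ContinuousMap.evalCLM ℝ k))

lemma continuous_evalWeakDual (T : X →ₗᵢ[ℝ] C(K, ℝ)) : Continuous T.evalWeakDual :=
  WeakDual.continuous_of_continuous_eval fun x => (T x).continuous

lemma toWeakDual_image_extremePoints_subset_range_evalWeakDual [T2Space K] [Nonempty K]
    (T : X →ₗᵢ[ℝ] C(K, ℝ)) :
    StrongDual.toWeakDual '' extremePoints ℝ (closedBall (0 : StrongDual ℝ X) 1) ⊆
      range T.evalWeakDual ∪ -range T.evalWeakDual := by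
  intro f hf
  obtain ⟨_, ⟨g, hg, rfl⟩, rfl⟩ := T.toWeakDual_image_extremePoints_subset hf
  obtain ⟨k, rfl | rfl⟩ := ContinuousMap.exists_eq_evalCLM_or_eq_neg_of_mem_extremePoints hg
  · exact .inl ⟨k, rfl⟩
  · exact .inr ⟨k, by simp [evalWeakDual]⟩

end LinearIsometry

theorem no_UEmbedding_of_connected_extreme_sphere_general
    (X : Type*) [NormedAddCommGroup X] [NormedSpace ℝ X]
    (hconn : IsConnected
      (closure (⇑StrongDual.toWeakDual ''
          Set.extremePoints ℝ (Metric.closedBall (0 : X →L[ℝ] ℝ) 1)) ∩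
        {f : WeakDual ℝ X | ‖WeakDual.toStrongDual f‖ = 1})) :
    ∀ (K : Type u) [TopologicalSpace K] [CompactSpace K] [T2Space K]
      (T : X →ₗᵢ[ℝ] C(K, ℝ)),
      ¬ ∀ f : X →L[ℝ] ℝ, ∃! g : C(K, ℝ) →L[ℝ] ℝ,
          (∀ x : X, g (T x) = f x) ∧ ‖g‖ = ‖f‖ := by
  intro K _ _ _ T hU
  set C := closure (StrongDual.toWeakDual '' extremePoints ℝ (closedBall (0 : X →L[ℝ] ℝ) 1)) ∩
    {f : WeakDual ℝ X | ‖WeakDual.toStrongDual f‖ = 1}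
  have : Nonempty K := by
    refine (isEmpty_or_nonempty K).resolve_left fun _ => ?_
    obtain ⟨f, -, hf⟩ := hconn.nonempty
    have : Subsingleton X := T.injective.subsingleton
    simp at hf
  have hsymm : ∀ f ∈ C, -f ∈ C := by
    rintro f ⟨hf, hf1⟩
    refine ⟨?_, by simpa using hf1⟩
    rwa [← mem_neg, neg_closure, StrongDual.neg_toWeakDual_image_extremePoints_closedBall]
  have hE : IsClosed (range T.evalWeakDual) :=
    (isCompact_range T.continuous_evalWeakDual).isClosed
  obtain ⟨_, ⟨-, hf1⟩, ⟨k, rfl⟩, ⟨k', hk'⟩⟩ := hconn.inter_inter_neg_nonempty hsymm hE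
    (inter_subset_left.trans ((hE.union hE.neg).closure_subset_iff.2
      T.toWeakDual_image_extremePoints_subset_range_evalWeakDual))
  have hδ := (hU (WeakDual.toStrongDual (T.evalWeakDual k))).unique
    (y₁ := ContinuousMap.evalCLM ℝ k) (y₂ := -ContinuousMap.evalCLM ℝ k')
    ⟨fun x => rfl, by rw [hf1, ContinuousMap.norm_evalCLM]⟩
    ⟨fun x => neg_eq_iff_eq_neg.2 congr($hk' x),
      by rw [hf1, ContinuousLinearMap.opNorm_neg, ContinuousMap.norm_evalCLM]⟩
  have h1 := congr($hδ 1)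
  norm_num at h1

/-- If the weak*-closure of the set of extreme points of `B_{X*}`, intersected with the
unit sphere `S_{X*}`, is connected in the weak* topology, then `X` cannot be U-embedded
into any `C(K)` space with `K` compact Hausdorff. -/
theorem no_UEmbedding_of_connected_extreme_sphere
    (X : Type*) [NormedAddCommGroup X] [NormedSpace ℝ X] [CompleteSpace X]
    (hconn : IsConnected
      (closure (⇑StrongDual.toWeakDual ''
          Set.extremePoints ℝ (Metric.closedBall (0 : X →L[ℝ] ℝ) 1)) ∩
        {f : WeakDual ℝ X | ‖WeakDual.toStrongDual f‖ = 1})) :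
    ∀ (K : Type u) [TopologicalSpace K] [CompactSpace K] [T2Space K]
      (T : X →ₗᵢ[ℝ] C(K, ℝ)),
      ¬ ∀ f : X →L[ℝ] ℝ, ∃! g : C(K, ℝ) →L[ℝ] ℝ,
          (∀ x : X, g (T x) = f x) ∧ ‖g‖ = ‖f‖ :=
  no_UEmbedding_of_connected_extreme_sphere_general X hconn
end

section
/- Let S be a compact Hausdorff space and K ⊆ S a retract of S which is also a zero-set of S (K = f⁻¹({0}) for some continuous f : S → [0,1]). Then there exists a U-embedding from C(K) into C(S). -/
/-- Let `S` be compact Hausdorff and `K ⊆ S` (a homeomorphic copy of the compact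
Hausdorff space `K` via the topological embedding `ι`) be a retract of `S` which is also
a zero-set of `S`. Then there is a U-embedding of `C(K)` into `C(S)`: a linear isometry
`T : C(K) → C(S)` such that every functional on `C(K)` has a unique norm-preserving
extension through `T`. -/
theorem UEmbedding_of_retract_zeroSet
    {S K : Type*} [TopologicalSpace S] [CompactSpace S] [T2Space S]
    [TopologicalSpace K] [CompactSpace K] [T2Space K]
    (ι : C(K, S)) (hι : Function.Injective ι)
    (r : C(S, K)) (hret : ∀ k : K, r (ι k) = k)
    (f : C(S, ℝ)) (hf01 : ∀ s : S, f s ∈ Set.Icc (0 : ℝ) 1)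
    (hzero : Set.range ι = {s : S | f s = 0}) :
    ∃ T : C(K, ℝ) →ₗᵢ[ℝ] C(S, ℝ),
      ∀ μ : C(K, ℝ) →L[ℝ] ℝ, ∃! ν : C(S, ℝ) →L[ℝ] ℝ,
        (∀ g : C(K, ℝ), ν (T g) = μ g) ∧ ‖ν‖ = ‖μ‖ := by
  classical
  have hfK : ∀ k : K, f (ι k) = 0 := by
    intro k
    have hk : ι k ∈ Set.range ι := Set.mem_range_self k
    rw [hzero] at hk; exact hk
  have hKf : ∀ s : S, f s = 0 → ∃ k, ι k = s := by
    intro s hs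
    have : s ∈ Set.range ι := by rw [hzero]; exact hs
    exact this
  -- the embedding `T g = (1 - f) * (g ∘ r)` as a linear map
  let Tlin : C(K, ℝ) →ₗ[ℝ] C(S, ℝ) :=
    { toFun := fun g => (1 - f) * g.comp r
      map_add' := fun g₁ g₂ => by ext s; simp [mul_add]
      map_smul' := fun c g => by ext s; simp }
  have hT : ∀ (g : C(K, ℝ)) (s : S), Tlin g s = (1 - f s) * g (r s) := by
    intro g s; rfl
  have hTι : ∀ (g : C(K, ℝ)) (k : K), Tlin g (ι k) = g k := by
    intro g k; rw [hT, hfK, hret]; ring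
  have hTnorm : ∀ g : C(K, ℝ), ‖Tlin g‖ = ‖g‖ := by
    intro g
    apply le_antisymm
    · refine (ContinuousMap.norm_le _ (norm_nonneg g)).mpr ?_
      intro s
      rw [hT, Real.norm_eq_abs, abs_mul]
      have h1 : |g (r s)| ≤ ‖g‖ := by
        have := g.norm_coe_le_norm (r s); rwa [Real.norm_eq_abs] at this
      have h2 : 0 ≤ f s := (hf01 s).1
      have h3 : f s ≤ 1 := (hf01 s).2
      have h4 : |1 - f s| ≤ 1 := by
        rw [abs_of_nonneg (by linarith)]; linarith
      calc |1 - f s| * |g (r s)| ≤ 1 * ‖g‖ :=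
            mul_le_mul h4 h1 (abs_nonneg _) zero_le_one
        _ = ‖g‖ := one_mul _
    · refine (ContinuousMap.norm_le _ (norm_nonneg _)).mpr ?_
      intro k
      have := (Tlin g).norm_coe_le_norm (ι k)
      rwa [hTι] at this
  -- the restriction map as a continuous linear map
  let Rlin : C(S, ℝ) →ₗ[ℝ] C(K, ℝ) :=
    { toFun := fun h => h.comp ι
      map_add' := fun a b => by ext k; simp
      map_smul' := fun c a => by ext k; simp }
  have hRapp : ∀ (h : C(S, ℝ)) (k : K), Rlin h k = h (ι k) := fun h k => rfl
  have hRbound : ∀ h : C(S, ℝ), ‖Rlin h‖ ≤ 1 * ‖h‖ := by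
    intro h
    rw [one_mul]
    refine (ContinuousMap.norm_le _ (norm_nonneg _)).mpr ?_
    intro k; exact h.norm_coe_le_norm (ι k)
  let R : C(S, ℝ) →L[ℝ] C(K, ℝ) := LinearMap.mkContinuous Rlin 1 hRbound
  have hRapp' : ∀ (h : C(S, ℝ)) (k : K), R h k = h (ι k) := fun h k => rfl
  refine ⟨⟨Tlin, hTnorm⟩, ?_⟩
  intro μ
  have hRT : ∀ g : C(K, ℝ), R (Tlin g) = g := by
    intro g; ext k; rw [hRapp', hTι]
  -- the key uniqueness estimate: any norm-preserving extension kills functions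
  -- vanishing on (the image of) K
  have key : ∀ ν' : C(S, ℝ) →L[ℝ] ℝ, (∀ g, ν' (Tlin g) = μ g) → ‖ν'‖ = ‖μ‖ →
      ∀ h : C(S, ℝ), (∀ k : K, h (ι k) = 0) → ν' h = 0 := by
    intro ν' hext' hnorm' h hvan
    have hf0 : ∀ s : S, f s = 0 → h s = 0 := by
      intro s hs; obtain ⟨k, rfl⟩ := hKf s hs; exact hvan k
    have main : ∀ θ : ℝ, 0 < θ → |ν' h| ≤ ‖μ‖ * θ := by
      intro θ hθ
      by_cases hC : ∃ s : S, θ ≤ |h s|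
      · -- there is a point where |h| ≥ θ; extract min of f on that compact set
        obtain ⟨s₁, hs₁⟩ := hC
        have hCcl : IsClosed {s : S | θ ≤ |h s|} :=
          isClosed_le continuous_const (continuous_abs.comp h.continuous)
        have hCcp : IsCompact {s : S | θ ≤ |h s|} := hCcl.isCompact
        obtain ⟨s₀, hs₀mem, hs₀min⟩ :=
          hCcp.exists_isMinOn ⟨s₁, hs₁⟩ f.continuous.continuousOn
        have hs₀min' : ∀ s : S, θ ≤ |h s| → f s₀ ≤ f s := fun s hs => hs₀min hs
        set δ : ℝ := f s₀ with hδ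
        have hδpos : 0 < δ := by
          rcases lt_or_eq_of_le (hf01 s₀).1 with h' | h'
          · exact h'
          · exfalso
            have hz : h s₀ = 0 := hf0 s₀ h'.symm
            have : θ ≤ |h s₀| := hs₀mem
            rw [hz, abs_zero] at this
            linarith
        set t : ℝ := δ / (‖h‖ + 1) with ht
        have hhpos : (0 : ℝ) < ‖h‖ + 1 := by positivity
        have htpos : 0 < t := div_pos hδpos hhpos
        have hth : t * ‖h‖ ≤ δ := by
          rw [ht, div_mul_eq_mul_div, div_le_iff₀ hhpos]
          nlinarith [norm_nonneg h, hδpos]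
        -- the pointwise estimate
        have hP : ∀ g : C(K, ℝ), ‖g‖ ≤ 1 → μ g + t * |ν' h| ≤ ‖μ‖ * (1 + t * θ) := by
          intro g hg
          set σ : ℝ := if 0 ≤ ν' h then 1 else -1 with hσ
          have hσν : σ * ν' h = |ν' h| := by
            rw [hσ]; split_ifs with h'
            · rw [one_mul, abs_of_nonneg h']
            · rw [abs_of_neg (lt_of_not_ge h')]; ring
          have hσabs : |σ| ≤ 1 := by rw [hσ]; split_ifs <;> simp
          set e : C(S, ℝ) := Tlin g + (σ * t) • h with he
          have hee : ∀ s, e s = (1 - f s) * g (r s) + σ * t * h s := by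
            intro s; rfl
          have hebd : ‖e‖ ≤ 1 + t * θ := by
            refine (ContinuousMap.norm_le _ (by positivity)).mpr ?_
            intro s
            rw [Real.norm_eq_abs, hee]
            have hgr : |g (r s)| ≤ 1 := by
              have := g.norm_coe_le_norm (r s); rw [Real.norm_eq_abs] at this
              linarith
            have h0 : 0 ≤ f s := (hf01 s).1
            have h1f : f s ≤ 1 := (hf01 s).2
            have habs : |(1 - f s) * g (r s) + σ * t * h s|
                ≤ |(1 - f s) * g (r s)| + |σ * t * h s| := abs_add_le _ _
            by_cases hs : θ ≤ |h s|
            · have hfs : δ ≤ f s := hs₀min' s hs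
              have hhs : |h s| ≤ ‖h‖ := by
                have := h.norm_coe_le_norm s; rwa [Real.norm_eq_abs] at this
              have e1 : |(1 - f s) * g (r s)| ≤ 1 - δ := by
                rw [abs_mul, abs_of_nonneg (by linarith : (0:ℝ) ≤ 1 - f s)]
                calc (1 - f s) * |g (r s)| ≤ (1 - δ) * 1 :=
                      mul_le_mul (by linarith) hgr (abs_nonneg _) (by linarith)
                  _ = 1 - δ := mul_one _
              have e2 : |σ * t * h s| ≤ t * ‖h‖ := by
                rw [abs_mul, abs_mul, abs_of_pos htpos]
                calc |σ| * t * |h s| ≤ 1 * t * ‖h‖ := by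
                      apply mul_le_mul
                        (mul_le_mul_of_nonneg_right hσabs (le_of_lt htpos)) hhs
                        (abs_nonneg _) (by positivity)
                  _ = t * ‖h‖ := by ring
              have hpos' : 0 ≤ t * θ := by positivity
              linarith
            · push_neg at hs
              have e1 : |(1 - f s) * g (r s)| ≤ 1 := by
                rw [abs_mul, abs_of_nonneg (by linarith : (0:ℝ) ≤ 1 - f s)]
                calc (1 - f s) * |g (r s)| ≤ 1 * 1 :=
                      mul_le_mul (by linarith) hgr (abs_nonneg _) zero_le_one
                  _ = 1 := one_mul _
              have e2 : |σ * t * h s| ≤ t * θ := by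
                rw [abs_mul, abs_mul, abs_of_pos htpos]
                calc |σ| * t * |h s| ≤ 1 * t * θ :=
                      mul_le_mul (mul_le_mul_of_nonneg_right hσabs htpos.le)
                        hs.le (abs_nonneg _) (by positivity)
                  _ = t * θ := by ring
              linarith
          have heval : ν' e = μ g + t * |ν' h| := by
            rw [he, map_add, map_smul, hext', smul_eq_mul]
            rw [← hσν]; ring
          calc μ g + t * |ν' h| = ν' e := heval.symm
            _ ≤ |ν' e| := le_abs_self _
            _ ≤ ‖ν'‖ * ‖e‖ := by
                have := ν'.le_opNorm e; rwa [Real.norm_eq_abs] at this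
            _ ≤ ‖μ‖ * (1 + t * θ) := by
                rw [hnorm']
                exact mul_le_mul_of_nonneg_left hebd (norm_nonneg μ)
        -- turn the pointwise estimate into an operator-norm bound
        set M : ℝ := ‖μ‖ * (1 + t * θ) - t * |ν' h| with hM
        have hM0 : 0 ≤ M := by
          have h0 := hP 0 (by simp)
          simp only [map_zero, zero_add] at h0
          rw [hM]; linarith
        have hμM : ‖μ‖ ≤ M := by
          apply ContinuousLinearMap.opNorm_le_bound _ hM0
          intro g
          by_cases hg0 : ‖g‖ = 0
          · have hg : g = 0 := norm_eq_zero.mp hg0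
            simp [hg]
          · have hgpos : 0 < ‖g‖ := lt_of_le_of_ne (norm_nonneg g) (Ne.symm hg0)
            set u : C(K, ℝ) := (‖g‖)⁻¹ • g with hu
            have hgne : g ≠ 0 := fun hgz => hg0 (by rw [hgz, norm_zero])
            have hun : ‖u‖ ≤ 1 := le_of_eq (norm_smul_inv_norm hgne)
            have h1 := hP u hun
            have h2 := hP (-u) (by rwa [norm_neg])
            rw [map_neg] at h2
            have hμu : |μ u| ≤ M := by
              rw [abs_le, hM]
              constructor
              · linarith
              · linarith
            have hgu : μ g = ‖g‖ * μ u := by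
              rw [hu, map_smul, smul_eq_mul, ← mul_assoc, mul_inv_cancel₀ hg0,
                one_mul]
            rw [Real.norm_eq_abs, hgu, abs_mul, abs_of_pos hgpos, mul_comm]
            exact mul_le_mul_of_nonneg_right hμu (le_of_lt hgpos)
        have hfin : t * |ν' h| ≤ t * (‖μ‖ * θ) := by
          rw [hM] at hμM; nlinarith
        exact le_of_mul_le_mul_left hfin htpos
      · -- |h| < θ everywhere
        push_neg at hC
        have hh : ‖h‖ ≤ θ := by
          refine (ContinuousMap.norm_le _ (le_of_lt hθ)).mpr ?_
          intro s; rw [Real.norm_eq_abs]; exact le_of_lt (hC s)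
        calc |ν' h| = ‖ν' h‖ := (Real.norm_eq_abs _).symm
          _ ≤ ‖ν'‖ * ‖h‖ := ν'.le_opNorm h
          _ ≤ ‖μ‖ * θ := by
              rw [hnorm']
              exact mul_le_mul_of_nonneg_left hh (norm_nonneg μ)
    -- let θ → 0
    by_contra hne
    have hpos : 0 < |ν' h| := abs_pos.mpr hne
    have hμ1 : (0 : ℝ) < ‖μ‖ + 1 := by positivity
    have := main (|ν' h| / (2 * (‖μ‖ + 1))) (by positivity)
    have hlt : ‖μ‖ * (|ν' h| / (2 * (‖μ‖ + 1))) < |ν' h| := by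
      have hq : ‖μ‖ / (2 * (‖μ‖ + 1)) ≤ 1 / 2 := by
        rw [div_le_div_iff₀ (by positivity) (by norm_num)]
        linarith [norm_nonneg μ]
      have hc : ‖μ‖ * (|ν' h| / (2 * (‖μ‖ + 1))) ≤ (1 / 2) * |ν' h| := by
        calc ‖μ‖ * (|ν' h| / (2 * (‖μ‖ + 1)))
            = (‖μ‖ / (2 * (‖μ‖ + 1))) * |ν' h| := by ring
          _ ≤ (1 / 2) * |ν' h| := mul_le_mul_of_nonneg_right hq (abs_nonneg _)
      linarith
    linarith
  -- assemble the existence and uniqueness statement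
  refine ⟨μ.comp R, ⟨?_, ?_⟩, ?_⟩
  · intro g
    simp only [ContinuousLinearMap.comp_apply, LinearIsometry.coe_mk]
    rw [hRT]
  · apply le_antisymm
    · apply ContinuousLinearMap.opNorm_le_bound _ (norm_nonneg μ)
      intro h
      calc ‖(μ.comp R) h‖ = ‖μ (R h)‖ := rfl
        _ ≤ ‖μ‖ * ‖R h‖ := μ.le_opNorm _
        _ ≤ ‖μ‖ * ‖h‖ := by
            have := hRbound h; rw [one_mul] at this
            exact mul_le_mul_of_nonneg_left this (norm_nonneg μ)
    · refine ContinuousLinearMap.opNorm_le_bound μ (norm_nonneg (μ.comp R)) ?_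
      intro g
      have h1 : μ g = (μ.comp R) (Tlin g) := by
        simp only [ContinuousLinearMap.comp_apply]; rw [hRT]
      calc ‖μ g‖ = ‖(μ.comp R) (Tlin g)‖ := by rw [h1]
        _ ≤ ‖μ.comp R‖ * ‖Tlin g‖ := (μ.comp R).le_opNorm _
        _ = ‖μ.comp R‖ * ‖g‖ := by rw [hTnorm]
  · rintro ν' ⟨hext', hnorm'⟩
    have hext'' : ∀ g, ν' (Tlin g) = μ g := by
      intro g
      have := hext' g
      simpa only [LinearIsometry.coe_mk] using this
    ext h
    have hvan : ∀ k : K, (h - Tlin (R h)) (ι k) = 0 := by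
      intro k
      simp only [ContinuousMap.sub_apply]
      rw [hTι, hRapp', sub_self]
    have h0 := key ν' hext'' hnorm' (h - Tlin (R h)) hvan
    have hsplit : ν' h = ν' (Tlin (R h)) + ν' (h - Tlin (R h)) := by
      rw [← map_add]; congr 1; abel
    rw [hsplit, h0, hext'', add_zero]
    rfl
end

section
/- The one-dimensional Banach space ℝ can be U-embedded into C(K) for a compact Hausdorff space K if and only if K contains at least one Gδ point. -/
/-! A linear isometry `T : ℝ → E` is a U-embedding exactly when `T 1` has a unique norming
functional `L` (`‖L‖ = 1 = L (T 1)`): every functional on `ℝ` is a multiple of the identity.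

In `C(K)`, every point `t` where `|g|` attains `‖g‖ = 1` gives the norming functional
`g t • δ_t`, and distinct points give distinct functionals (Urysohn). So uniqueness forces `|g|`
to peak at a single point `t₀`, which is then the preimage of `{1}` under `|g|`, hence Gδ.
Conversely, if `|g|` peaks only at `t₀`, a norming functional `L` kills every `h` vanishing at
`t₀`: off the open set where `|h| < ε`, `|g|` stays below some `1 - η`, so
`‖g + s • h‖ ≤ 1 + s ε` for small `s > 0`, whence `L h ≤ ε`. A Gδ point of a compact Hausdorff
space is the peak set of an Urysohn function. -/

open ContinuousLinearMap

section NormPreservingExtension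

variable {𝕜 E : Type*} [NontriviallyNormedField 𝕜] [NormedAddCommGroup E] [NormedSpace 𝕜 E]

theorem forall_existsUnique_normPreserving_extension_iff (T : 𝕜 →ₗ[𝕜] E) :
    (∀ f : 𝕜 →L[𝕜] 𝕜, ∃! g : E →L[𝕜] 𝕜, (∀ a : 𝕜, g (T a) = f a) ∧ ‖g‖ = ‖f‖) ↔
      ∃! L : E →L[𝕜] 𝕜, L (T 1) = 1 ∧ ‖L‖ = 1 := by
  have extends_iff (g : E →L[𝕜] 𝕜) (f : 𝕜 →L[𝕜] 𝕜) :
      (∀ a : 𝕜, g (T a) = f a) ↔ g (T 1) = f 1 :=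
    ⟨fun h => h 1, fun h a => by
      rw [← mul_one a, ← smul_eq_mul, map_smul, map_smul, map_smul, h]⟩
  have norm_eq (f : 𝕜 →L[𝕜] 𝕜) : ‖f‖ = ‖f 1‖ := by
    rw [show f = f 1 • ContinuousLinearMap.id 𝕜 𝕜 from ext_ring (by simp), norm_smul,
      norm_id, mul_one]
    simp
  simp only [extends_iff, norm_eq]
  constructor
  · exact fun h => by simpa using h (ContinuousLinearMap.id 𝕜 𝕜)
  · rintro ⟨L, ⟨hLx, hL⟩, huniq⟩ f
    refine ⟨f 1 • L, ⟨by simp [hLx], by rw [norm_smul, hL, mul_one]⟩, ?_⟩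
    rintro g ⟨hgx, hg⟩
    rcases eq_or_ne (f 1) 0 with hf | hf
    · rw [hf, norm_zero, opNorm_zero_iff] at hg
      rw [hf, hg]
      exact (zero_smul 𝕜 L).symm
    · have : (f 1)⁻¹ • g = L := huniq _ ⟨by simp [hgx, hf], by
        rw [norm_smul, hg, norm_inv, inv_mul_cancel₀ (norm_ne_zero_iff.2 hf)]⟩
      rw [← this, smul_inv_smul₀ hf]

end NormPreservingExtension

namespace ContinuousMap

variable {K : Type*} [TopologicalSpace K]

theorem smul_evalCLM_apply_self {g : C(K, ℝ)} {t : K} (ht : |g t| = 1) :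
    (g t • evalCLM ℝ t : C(K, ℝ) →L[ℝ] ℝ) g = 1 := by
  show g t * g t = 1
  rw [← abs_mul_abs_self, ht, one_mul]

variable [CompactSpace K]

theorem norm_evalCLM_le (t : K) : ‖(evalCLM ℝ t : C(K, ℝ) →L[ℝ] ℝ)‖ ≤ 1 :=
  opNorm_le_bound _ zero_le_one fun h => by simpa using h.norm_coe_le_norm t

theorem norm_smul_evalCLM {g : C(K, ℝ)} (hg : ‖g‖ ≤ 1) {t : K} (ht : |g t| = 1) :
    ‖(g t • evalCLM ℝ t : C(K, ℝ) →L[ℝ] ℝ)‖ = 1 := by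
  refine le_antisymm ?_ ?_
  · calc _ ≤ ‖g t‖ * ‖(evalCLM ℝ t : C(K, ℝ) →L[ℝ] ℝ)‖ := opNorm_smul_le _ _
      _ ≤ 1 := by rw [Real.norm_eq_abs, ht, one_mul]; exact norm_evalCLM_le t
  · calc (1 : ℝ) = ‖(g t • evalCLM ℝ t : C(K, ℝ) →L[ℝ] ℝ) g‖ := by
          rw [smul_evalCLM_apply_self ht, norm_one]
      _ ≤ _ * ‖g‖ := le_opNorm _ _
      _ ≤ _ := mul_le_of_le_one_right (norm_nonneg _) hg

theorem apply_le_of_norming_of_peak {g h : C(K, ℝ)} {t₀ : K} (hg : ‖g‖ ≤ 1)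
    (hpeak : ∀ t, |g t| = 1 → t = t₀) {L : C(K, ℝ) →L[ℝ] ℝ} (hL : ‖L‖ ≤ 1) (hLg : L g = 1)
    (hh : h t₀ = 0) {ε : ℝ} (hε : 0 < ε) : L h ≤ ε := by
  have hg_le (t : K) : |g t| ≤ 1 := by simpa using (g.norm_coe_le_norm t).trans hg
  obtain ⟨η, hη, hgη⟩ : ∃ η > 0, ∀ t ∈ {t | ε ≤ |h t|}, η ≤ 1 - |g t| := by
    refine (isClosed_le continuous_const h.continuous.abs).isCompact.exists_forall_le'
      (continuous_const.sub g.continuous.abs).continuousOn fun t ht => ?_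
    have hgt : |g t| ≠ 1 := fun hgt => by
      have : ε ≤ |h t₀| := hpeak t hgt ▸ ht
      simp only [hh, abs_zero] at this
      linarith
    show 0 < 1 - |g t|
    linarith [(hg_le t).lt_of_ne hgt]
  set s := η / (‖h‖ + 1)
  have hs : 0 < s := by positivity
  have hsh : s * ‖h‖ ≤ η := by
    rw [div_mul_eq_mul_div, div_le_iff₀ (by positivity)]
    nlinarith [norm_nonneg h]
  have hbound : ‖g + s • h‖ ≤ 1 + s * ε := by
    refine (norm_le _ (by positivity)).2 fun t => ?_
    have hht : |h t| ≤ ‖h‖ := by simpa using h.norm_coe_le_norm t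
    calc ‖(g + s • h) t‖ ≤ |g t| + s * |h t| := by
          simpa [abs_of_pos hs] using abs_add_le (g t) (s * h t)
      _ ≤ 1 + s * ε := by
          by_cases htε : ε ≤ |h t|
          · nlinarith [hgη t htε]
          · nlinarith [hg_le t]
  have : 1 + s * L h ≤ 1 + s * ε :=
    calc 1 + s * L h = L (g + s • h) := by simp [hLg]
      _ ≤ ‖L‖ * ‖g + s • h‖ := (le_abs_self _).trans (le_opNorm L _)
      _ ≤ 1 + s * ε := by nlinarith [norm_nonneg L, norm_nonneg (g + s • h)]
  exact le_of_mul_le_mul_left (by linarith) hs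

theorem eq_smul_evalCLM_of_norming_of_peak {g : C(K, ℝ)} {t₀ : K} (hg : ‖g‖ ≤ 1)
    (hpeak : ∀ t, |g t| = 1 → t = t₀) (ht₀ : |g t₀| = 1) {L : C(K, ℝ) →L[ℝ] ℝ}
    (hL : ‖L‖ ≤ 1) (hLg : L g = 1) : L = g t₀ • evalCLM ℝ t₀ := by
  have vanish (h : C(K, ℝ)) (hh : h t₀ = 0) : L h = 0 := by
    have hle (h : C(K, ℝ)) (hh : h t₀ = 0) : L h ≤ 0 := le_of_forall_pos_le_add fun ε hε => by
      simpa using apply_le_of_norming_of_peak hg hpeak hL hLg hh hε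
    exact le_antisymm (hle h hh) (by simpa using hle (-h) (by simp [hh]))
  ext h
  have hsq : g t₀ * g t₀ = 1 := by rw [← abs_mul_abs_self, ht₀, one_mul]
  have := vanish (h - (g t₀ * h t₀) • g) (by
    simp only [sub_apply, smul_apply, smul_eq_mul]
    linear_combination (-h t₀) * hsq)
  rwa [map_sub, map_smul, hLg, smul_eq_mul, mul_one, sub_eq_zero] at this

theorem existsUnique_norming_iff [T2Space K] {g : C(K, ℝ)} (hg : ‖g‖ = 1) :
    (∃! L : C(K, ℝ) →L[ℝ] ℝ, L g = 1 ∧ ‖L‖ = 1) ↔ ∃ t₀, {t | |g t| = 1} = {t₀} := by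
  constructor
  · rintro ⟨L, -, huniq⟩
    obtain ⟨t₀, ht₀⟩ : ∃ t₀, |g t₀| = 1 := by
      obtain ⟨t₀, ht₀⟩ : ∃ t₀, ¬ ‖g t₀‖ < 1 := by
        simpa only [norm_lt_iff _ one_pos, not_forall] using hg.not_lt
      exact ⟨t₀, le_antisymm (by simpa [hg] using g.norm_coe_le_norm t₀) (by simpa using ht₀)⟩
    refine ⟨t₀, Set.eq_singleton_iff_unique_mem.2 ⟨ht₀, fun t ht => ?_⟩⟩
    by_contra hne
    obtain ⟨u, hu0, hu1, -⟩ := exists_continuous_zero_one_of_isClosed isClosed_singleton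
      isClosed_singleton (Set.disjoint_singleton.2 hne)
    have := congrArg (· u)
      ((huniq _ ⟨smul_evalCLM_apply_self ht, norm_smul_evalCLM hg.le ht⟩).trans
        (huniq _ ⟨smul_evalCLM_apply_self ht₀, norm_smul_evalCLM hg.le ht₀⟩).symm)
    simp [hu0 rfl, hu1 rfl] at this
    simp [← this] at ht₀
  · rintro ⟨t₀, hpeak⟩
    have ht₀ : |g t₀| = 1 := hpeak.symm.subset rfl
    exact ⟨_, ⟨smul_evalCLM_apply_self ht₀, norm_smul_evalCLM hg.le ht₀⟩, fun L hL =>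
      eq_smul_evalCLM_of_norming_of_peak hg.le (fun t ht => hpeak.subset ht) ht₀ hL.2.le hL.1⟩

end ContinuousMap

/-- The one-dimensional Banach space `ℝ` can be U-embedded into `C(K)` (`K` compact
Hausdorff) if and only if `K` contains at least one `Gδ` point. -/
theorem real_UEmbeddable_iff_exists_Gdelta_point
    (K : Type*) [TopologicalSpace K] [CompactSpace K] [T2Space K] :
    (∃ T : ℝ →ₗᵢ[ℝ] C(K, ℝ),
        ∀ f : ℝ →L[ℝ] ℝ, ∃! g : C(K, ℝ) →L[ℝ] ℝ,
          (∀ x : ℝ, g (T x) = f x) ∧ ‖g‖ = ‖f‖) ↔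
      ∃ t : K, IsGδ ({t} : Set K) := by
  constructor
  · rintro ⟨T, hT⟩
    obtain ⟨t₀, hpeak⟩ := (ContinuousMap.existsUnique_norming_iff (by simp)).1
      ((forall_existsUnique_normPreserving_extension_iff T.toLinearMap).1 hT)
    exact ⟨t₀, hpeak ▸ (IsClosed.isGδ isClosed_singleton).preimage (T 1).continuous.abs⟩
  · rintro ⟨t₀, ht₀⟩
    obtain ⟨g, hg1, -, -, hg01⟩ := exists_continuous_one_zero_of_isCompact_of_isGδ
      isCompact_singleton ht₀ isClosed_empty (Set.disjoint_empty _)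
    have hpeak : {t | |g t| = 1} = {t₀} := by
      rw [hg1]
      ext t
      simp [abs_of_nonneg (hg01 t).1]
    have hnorm : ‖g‖ = 1 := le_antisymm
      ((ContinuousMap.norm_le _ zero_le_one).2 fun t => by
        simpa [abs_of_nonneg (hg01 t).1] using (hg01 t).2)
      (by simpa [show g t₀ = 1 from hg1.subset rfl] using g.norm_coe_le_norm t₀)
    refine ⟨LinearIsometry.toSpanSingleton ℝ _ hnorm, ?_⟩
    refine (forall_existsUnique_normPreserving_extension_iff _).2 ?_
    simpa using (ContinuousMap.existsUnique_norming_iff hnorm).2 ⟨t₀, hpeak⟩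
end
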